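/- arXiv:1410.4432 — 4 statements merged into one kernel-verified Lean document; each statement's English description precedes it below -/
import Mathlib

section
/- Let φ : Meas(Ω,[0,1]) → [0,1] be a finitely additive integration operator. Then φ has a unique linear extension to the real vector space of bounded measurable functions Ω → ℝ. -/
/-!
Transport `φ` along `x ↦ 2x - 1` to a functional `χ` on measurable functions with values in
`[-1, 1]`. It is still affine, vanishes at `0` (weak averaging at `1/2`) and is odd (affinity
applied to `u` and `1 - u`), hence `χ (t • g) = t * χ g` for `|t| ≤ 1`. So `C * χ (f / C)` does
not depend on the bound `C ≥ |f|`, and affinity makes it additive and homogeneous. Conversely,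
`f = C • (2 • u - 1)` with `u ∈ Meas(Ω, [0,1])`, so a linear extension has no other choice.
-/

open Set Filter

/-- The set of measurable functions `Ω → [0,1]`. -/
def MeasI (Ω : Type*) [MeasurableSpace Ω] : Set (Ω → ℝ) :=
  {f | Measurable f ∧ ∀ ω, f ω ∈ Set.Icc (0:ℝ) 1}

/-- A finitely additive integration operator on `Ω`: an affine, weakly averaging
functional `Meas(Ω,[0,1]) → [0,1]`. -/
structure FinAddIntOp (Ω : Type*) [MeasurableSpace Ω] where
  toFun : MeasI Ω → ℝ
  mem_Icc : ∀ f, toFun f ∈ Set.Icc (0:ℝ) 1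
  affine : ∀ (f g : MeasI Ω) (r : ℝ), r ∈ Set.Icc (0:ℝ) 1 →
    ∀ h : (fun ω => r * (f : Ω → ℝ) ω + (1 - r) * (g : Ω → ℝ) ω) ∈ MeasI Ω,
    toFun ⟨_, h⟩ = r * toFun f + (1 - r) * toFun g
  avg : ∀ r ∈ Set.Icc (0:ℝ) 1, ∀ h : (fun _ : Ω => r) ∈ MeasI Ω, toFun ⟨_, h⟩ = r

theorem indicator_mem_MeasI {Ω : Type*} [MeasurableSpace Ω] {A : Set Ω}
    (hA : MeasurableSet A) : A.indicator (fun _ => (1:ℝ)) ∈ MeasI Ω := by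
  constructor
  · exact measurable_const.indicator hA
  · intro ω
    by_cases h : ω ∈ A <;> simp [Set.indicator_apply, h]

/-- The vector space of bounded measurable real-valued functions on `Ω`, as a
submodule of `Ω → ℝ`. -/
def Mb (Ω : Type*) [MeasurableSpace Ω] : Submodule ℝ (Ω → ℝ) where
  carrier := {f | Measurable f ∧ ∃ C, ∀ ω, |f ω| ≤ C}
  zero_mem' := ⟨measurable_const, 0, by simp⟩
  add_mem' := by
    rintro f g ⟨hf, Cf, hCf⟩ ⟨hg, Cg, hCg⟩
    exact ⟨hf.add hg, Cf + Cg, fun ω =>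
      (abs_add_le _ _).trans (add_le_add (hCf ω) (hCg ω))⟩
  smul_mem' := by
    rintro c f ⟨hf, Cf, hCf⟩
    refine ⟨hf.const_smul c, |c| * Cf, fun ω => ?_⟩
    have : |c * f ω| = |c| * |f ω| := abs_mul c (f ω)
    calc |(c • f) ω| = |c| * |f ω| := this
      _ ≤ |c| * Cf := by
          exact mul_le_mul_of_nonneg_left (hCf ω) (abs_nonneg c)

theorem mem_Mb_of_mem_MeasI {Ω : Type*} [MeasurableSpace Ω] (f : MeasI Ω) :
    (f : Ω → ℝ) ∈ Mb Ω :=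
  ⟨f.2.1, 1, fun ω => abs_le.mpr ⟨by linarith [(f.2.2 ω).1], (f.2.2 ω).2⟩⟩

theorem convex_MeasI (Ω : Type*) [MeasurableSpace Ω] : Convex ℝ (MeasI Ω) := by
  rintro f ⟨hf, hf01⟩ g ⟨hg, hg01⟩ a b ha hb hab
  refine ⟨(hf.const_smul a).add (hg.const_smul b), fun ω => ?_⟩
  simp only [Pi.add_apply, Pi.smul_apply, smul_eq_mul]
  exact ⟨add_nonneg (mul_nonneg ha (hf01 ω).1) (mul_nonneg hb (hg01 ω).1),
    hab ▸ add_le_add (mul_le_of_le_one_right ha (hf01 ω).2)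
      (mul_le_of_le_one_right hb (hg01 ω).2)⟩

theorem const_mem_MeasI {Ω : Type*} [MeasurableSpace Ω] {r : ℝ} (hr : r ∈ Icc (0 : ℝ) 1) :
    (fun _ : Ω => r) ∈ MeasI Ω :=
  ⟨measurable_const, fun _ => hr⟩

theorem Mb.exists_pos_bound {Ω : Type*} [MeasurableSpace Ω] (f : Mb Ω) :
    ∃ C, 0 < C ∧ ∀ ω, |(f : Ω → ℝ) ω| ≤ C := by
  obtain ⟨C, hC⟩ := f.2.2
  exact ⟨max C 1, by positivity, fun ω => (hC ω).trans (le_max_left _ _)⟩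

def unitBall (Ω : Type*) [MeasurableSpace Ω] : Set (Ω → ℝ) :=
  {g | Measurable g ∧ ∀ ω, |g ω| ≤ 1}

theorem inv_smul_mem_unitBall {Ω : Type*} [MeasurableSpace Ω] {f : Ω → ℝ} {C : ℝ}
    (hf : Measurable f) (hC : 0 < C) (hb : ∀ ω, |f ω| ≤ C) : C⁻¹ • f ∈ unitBall Ω := by
  refine ⟨hf.const_smul _, fun ω => ?_⟩
  rw [Pi.smul_apply, smul_eq_mul, abs_mul, abs_inv, abs_of_pos hC]
  exact inv_mul_le_one_of_le₀ (hb ω) hC.le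

theorem smul_mem_unitBall {Ω : Type*} [MeasurableSpace Ω] {g : Ω → ℝ} {t : ℝ}
    (hg : g ∈ unitBall Ω) (ht : |t| ≤ 1) : t • g ∈ unitBall Ω := by
  refine ⟨hg.1.const_smul t, fun ω => ?_⟩
  rw [Pi.smul_apply, smul_eq_mul, abs_mul]
  exact mul_le_one₀ ht (abs_nonneg _) (hg.2 ω)

theorem half_one_add_mem_MeasI {Ω : Type*} [MeasurableSpace Ω] {g : Ω → ℝ}
    (hg : g ∈ unitBall Ω) : (fun ω => (1 + g ω) / 2) ∈ MeasI Ω := by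
  refine ⟨(measurable_const.add hg.1).div_const 2, fun ω => ?_⟩
  obtain ⟨hlo, hhi⟩ := abs_le.mp (hg.2 ω)
  constructor <;> linarith

namespace FinAddIntOp

variable {Ω : Type*} [MeasurableSpace Ω] (φ : FinAddIntOp Ω)

open Classical in
/-- `φ` on all of `Ω → ℝ`, with the junk value `0` outside `MeasI Ω`. -/
noncomputable def eval (f : Ω → ℝ) : ℝ :=
  if h : f ∈ MeasI Ω then φ.toFun ⟨f, h⟩ else 0

theorem eval_coe (f : MeasI Ω) : φ.eval f = φ.toFun f := dif_pos f.2

theorem eval_const {r : ℝ} (hr : r ∈ Icc (0 : ℝ) 1) : φ.eval (fun _ => r) = r := by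
  rw [eval, dif_pos (const_mem_MeasI hr)]
  exact φ.avg r hr _

theorem eval_convexComb {f g : Ω → ℝ} (hf : f ∈ MeasI Ω) (hg : g ∈ MeasI Ω) {r : ℝ}
    (hr : r ∈ Icc (0 : ℝ) 1) :
    φ.eval (fun ω => r * f ω + (1 - r) * g ω) = r * φ.eval f + (1 - r) * φ.eval g := by
  have hmem : (fun ω => r * f ω + (1 - r) * g ω) ∈ MeasI Ω :=
    convex_MeasI Ω hf hg hr.1 (sub_nonneg.2 hr.2) (add_sub_cancel r 1)
  rw [eval, dif_pos hmem, eval, dif_pos hf, eval, dif_pos hg]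
  exact φ.affine ⟨f, hf⟩ ⟨g, hg⟩ r hr hmem

/-- `φ` transported along the affine bijection `[0,1] ≃ [-1,1]`, `x ↦ 2x - 1`. -/
noncomputable def centered (g : Ω → ℝ) : ℝ :=
  2 * φ.eval (fun ω => (1 + g ω) / 2) - 1

theorem centered_eq_eval {f : Ω → ℝ} (hf : f ∈ MeasI Ω) : φ.centered f = φ.eval f := by
  have h := φ.eval_convexComb hf (const_mem_MeasI (r := 1) (by norm_num)) (r := 1 / 2)
    (by norm_num)
  rw [eval_const φ (by norm_num)] at h
  rw [centered, show (fun ω => (1 + f ω) / 2) = fun ω => 1 / 2 * f ω + (1 - 1 / 2) * 1 by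
    funext ω; ring, h]
  ring

theorem centered_zero : φ.centered 0 = 0 := by
  rw [centered, show (fun ω => (1 + (0 : Ω → ℝ) ω) / 2) = fun _ => 1 / 2 by
    funext ω; simp only [Pi.zero_apply]; norm_num, eval_const φ (by norm_num)]
  norm_num

theorem centered_convexComb {g h : Ω → ℝ} (hg : g ∈ unitBall Ω) (hh : h ∈ unitBall Ω) {r : ℝ}
    (hr : r ∈ Icc (0 : ℝ) 1) :
    φ.centered (r • g + (1 - r) • h) = r * φ.centered g + (1 - r) * φ.centered h := by
  have hfun : (fun ω => (1 + (r • g + (1 - r) • h) ω) / 2)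
      = fun ω => r * ((1 + g ω) / 2) + (1 - r) * ((1 + h ω) / 2) := by
    funext ω
    simp only [Pi.add_apply, Pi.smul_apply, smul_eq_mul]
    ring
  rw [centered, centered, centered, hfun,
    φ.eval_convexComb (half_one_add_mem_MeasI hg) (half_one_add_mem_MeasI hh) hr]
  ring

theorem centered_neg {g : Ω → ℝ} (hg : g ∈ unitBall Ω) : φ.centered (-g) = -φ.centered g := by
  have h := φ.eval_convexComb (half_one_add_mem_MeasI hg)
    (half_one_add_mem_MeasI (smul_mem_unitBall hg (t := -1) (by norm_num))) (r := 1 / 2)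
    (by norm_num)
  rw [show (fun ω => 1 / 2 * ((1 + g ω) / 2) + (1 - 1 / 2) * ((1 + ((-1 : ℝ) • g) ω) / 2))
    = fun _ => 1 / 2 by funext ω; simp only [Pi.smul_apply, smul_eq_mul]; ring,
    eval_const φ (by norm_num), neg_one_smul] at h
  rw [centered, centered]
  simp only [Pi.neg_apply, ← sub_eq_add_neg] at h ⊢
  linarith

theorem centered_smul {g : Ω → ℝ} (hg : g ∈ unitBall Ω) {t : ℝ} (ht : |t| ≤ 1) :
    φ.centered (t • g) = t * φ.centered g := by
  have zero_mem : (0 : Ω → ℝ) ∈ unitBall Ω := ⟨measurable_const, fun _ => by simp⟩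
  have nonneg : ∀ s, 0 ≤ s → s ≤ 1 → φ.centered (s • g) = s * φ.centered g := by
    intro s hs0 hs1
    have := φ.centered_convexComb hg zero_mem ⟨hs0, hs1⟩
    rwa [smul_zero, add_zero, centered_zero, mul_zero, add_zero] at this
  obtain ⟨hlo, hhi⟩ := abs_le.mp ht
  rcases le_total 0 t with h0 | h0
  · exact nonneg t h0 hhi
  · rw [show t • g = -((-t) • g) by rw [neg_smul, neg_neg],
      φ.centered_neg (smul_mem_unitBall hg (by rwa [abs_neg])), nonneg (-t) (by linarith)
      (by linarith)]
    ring

theorem centered_scale_eq {f : Ω → ℝ} (hf : Measurable f) {C C' : ℝ} (hC : 0 < C)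
    (hC' : 0 < C') (hb : ∀ ω, |f ω| ≤ C) (hb' : ∀ ω, |f ω| ≤ C') :
    C * φ.centered (C⁻¹ • f) = C' * φ.centered (C'⁻¹ • f) := by
  wlog hle : C ≤ C' generalizing C C'
  · exact (this hC' hC hb' hb (le_of_not_ge hle)).symm
  have ht : |C / C'| ≤ 1 := by
    rw [abs_of_pos (div_pos hC hC')]
    exact div_le_one_of_le₀ hle hC'.le
  rw [show C'⁻¹ • f = (C / C') • C⁻¹ • f by rw [smul_smul]; field_simp,
    φ.centered_smul (inv_smul_mem_unitBall hf hC hb) ht]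
  field_simp

noncomputable def extend (f : Mb Ω) : ℝ :=
  let C := (Mb.exists_pos_bound f).choose
  C * φ.centered (C⁻¹ • (f : Ω → ℝ))

theorem extend_eq (f : Mb Ω) {C : ℝ} (hC : 0 < C) (hb : ∀ ω, |(f : Ω → ℝ) ω| ≤ C) :
    φ.extend f = C * φ.centered (C⁻¹ • (f : Ω → ℝ)) :=
  have hspec := (Mb.exists_pos_bound f).choose_spec
  φ.centered_scale_eq f.2.1 hspec.1 hC hspec.2 hb

theorem extend_add (f g : Mb Ω) : φ.extend (f + g) = φ.extend f + φ.extend g := by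
  obtain ⟨C, hC, hbf⟩ := Mb.exists_pos_bound f
  obtain ⟨D, hD, hbg⟩ := Mb.exists_pos_bound g
  have hCD : 0 < C + D := add_pos hC hD
  have hb : ∀ ω, |((f + g : Mb Ω) : Ω → ℝ) ω| ≤ C + D := fun ω =>
    (abs_add_le _ _).trans (add_le_add (hbf ω) (hbg ω))
  have hr : C / (C + D) ∈ Icc (0 : ℝ) 1 :=
    ⟨(div_pos hC hCD).le, div_le_one_of_le₀ (by linarith) hCD.le⟩
  have hsplit : (C + D)⁻¹ • ((f + g : Mb Ω) : Ω → ℝ)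
      = (C / (C + D)) • C⁻¹ • (f : Ω → ℝ) + (1 - C / (C + D)) • D⁻¹ • (g : Ω → ℝ) := by
    funext ω
    simp only [Submodule.coe_add, Pi.add_apply, Pi.smul_apply, smul_eq_mul]
    field_simp
    ring
  rw [φ.extend_eq _ hCD hb, φ.extend_eq f hC hbf, φ.extend_eq g hD hbg, hsplit,
    φ.centered_convexComb (inv_smul_mem_unitBall f.2.1 hC hbf)
      (inv_smul_mem_unitBall g.2.1 hD hbg) hr]
  field_simp
  ring

theorem extend_smul (c : ℝ) (f : Mb Ω) : φ.extend (c • f) = c * φ.extend f := by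
  obtain ⟨C, hC, hb⟩ := Mb.exists_pos_bound f
  have hc : 0 < |c| + 1 := by positivity
  have hb' : ∀ ω, |((c • f : Mb Ω) : Ω → ℝ) ω| ≤ (|c| + 1) * C := fun ω => by
    rw [Submodule.coe_smul, Pi.smul_apply, smul_eq_mul, abs_mul]
    exact mul_le_mul (by linarith) (hb ω) (abs_nonneg _) hc.le
  have ht : |c / (|c| + 1)| ≤ 1 := by
    rw [abs_div, abs_of_pos hc]
    exact div_le_one_of_le₀ (by linarith) hc.le
  rw [φ.extend_eq _ (mul_pos hc hC) hb', φ.extend_eq f hC hb,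
    show ((|c| + 1) * C)⁻¹ • ((c • f : Mb Ω) : Ω → ℝ) = (c / (|c| + 1)) • C⁻¹ • (f : Ω → ℝ) by
      rw [Submodule.coe_smul, smul_smul, smul_smul]; congr 1; field_simp,
    φ.centered_smul (inv_smul_mem_unitBall f.2.1 hC hb) ht]
  field_simp

noncomputable def extendLinear : Mb Ω →ₗ[ℝ] ℝ where
  toFun := φ.extend
  map_add' := φ.extend_add
  map_smul' := φ.extend_smul

theorem extendLinear_apply_coe (f : MeasI Ω) :
    φ.extendLinear ⟨f, mem_Mb_of_mem_MeasI f⟩ = φ.toFun f := by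
  have hb : ∀ ω, |(f : Ω → ℝ) ω| ≤ 1 := fun ω =>
    abs_le.mpr ⟨by linarith [(f.2.2 ω).1], (f.2.2 ω).2⟩
  change φ.extend _ = _
  rw [φ.extend_eq _ one_pos hb, inv_one, one_smul, one_mul, φ.centered_eq_eval f.2, eval_coe]

theorem eq_extendLinear_of_forall_apply_coe (ψ : Mb Ω →ₗ[ℝ] ℝ)
    (hψ : ∀ f : MeasI Ω, ψ ⟨f, mem_Mb_of_mem_MeasI f⟩ = φ.toFun f) : ψ = φ.extendLinear := by
  ext f
  obtain ⟨C, hC, hb⟩ := Mb.exists_pos_bound f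
  let u : MeasI Ω := ⟨_, half_one_add_mem_MeasI (inv_smul_mem_unitBall f.2.1 hC hb)⟩
  let one : MeasI Ω := ⟨_, const_mem_MeasI (r := 1) (by norm_num)⟩
  have hf : f = (2 * C) • (⟨u, mem_Mb_of_mem_MeasI u⟩ : Mb Ω)
      - C • ⟨one, mem_Mb_of_mem_MeasI one⟩ := by
    ext ω
    simp only [u, one, Submodule.coe_sub, Submodule.coe_smul, Pi.sub_apply, Pi.smul_apply,
      smul_eq_mul]
    field_simp
    ring
  have hone : φ.toFun one = 1 := φ.avg 1 (by norm_num) _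
  change ψ f = φ.extend f
  rw [φ.extend_eq f hC hb]
  change ψ f = C * (2 * φ.eval u - 1)
  rw [eval_coe, hf, map_sub, map_smul, map_smul, hψ, hψ, hone, smul_eq_mul, smul_eq_mul]
  ring

end FinAddIntOp

/-- A finitely additive integration operator has a unique linear extension to the
vector space of bounded measurable functions. -/
theorem stmt9 {Ω : Type*} [MeasurableSpace Ω] (φ : FinAddIntOp Ω) :
    ∃! ψ : Mb Ω →ₗ[ℝ] ℝ, ∀ f : MeasI Ω, ψ ⟨(f : Ω → ℝ), mem_Mb_of_mem_MeasI f⟩ = φ.toFun f :=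
  ⟨φ.extendLinear, φ.extendLinear_apply_coe, φ.eq_extendLinear_of_forall_apply_coe⟩
end

section
/- Let c and c' be convex subsets of real vector spaces V and V', and h : c → c' an affine map (i.e., h(r·x + (1−r)·y) = r·h(x) + (1−r)·h(y) for x, y ∈ c and r ∈ [0,1]). Then h has a unique extension to an affine map aff(c) → aff(c'), where aff(c) = { r·u + (1−r)·v : u, v ∈ c, r ∈ ℝ } is the affine span of c in V. -/
/-!
The graph of `h` in `V × V'` is convex, so `h` commutes with all finite convex combinations.
Splitting the coefficients of an affine dependency `∑ aᵢ xᵢ = 0`, `∑ aᵢ = 0` among points of `c`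
into positive and negative parts turns it into an equality of two convex combinations with the same
total weight, so `h` preserves affine dependencies. These are exactly the linear relations among
the vectors `(x, 1) ∈ V × ℝ`, so `(x, 1) ↦ h x` extends to a linear map on `V × ℝ`, i.e. `h`
extends to an affine map `V → V'`. An affine map on `aff c` is determined by its values on `c`,
since every point of `aff c` is some `r • u + (1 - r) • v` with `u, v ∈ c`.
-/

open Set

/-- The affine span of a subset of a real vector space, described concretely as the
set of combinations `r • u + (1 - r) • v` with `u, v ∈ c` and `r : ℝ`. -/
def affSpanSet {V : Type*} [AddCommGroup V] [Module ℝ V] (c : Set V) : Set V :=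
  {w | ∃ u ∈ c, ∃ v ∈ c, ∃ r : ℝ, w = r • u + (1 - r) • v}

theorem mem_affSpanSet_self {V : Type*} [AddCommGroup V] [Module ℝ V] {c : Set V}
    {x : V} (hx : x ∈ c) : x ∈ affSpanSet c :=
  ⟨x, hx, x, hx, 1, by simp⟩

theorem LinearMap.exists_comp_eq_of_ker_le {K M N P : Type*} [Field K] [AddCommGroup M]
    [Module K M] [AddCommGroup N] [Module K N] [AddCommGroup P] [Module K P]
    (f : M →ₗ[K] N) (g : M →ₗ[K] P) (hfg : LinearMap.ker f ≤ LinearMap.ker g) :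
    ∃ G : N →ₗ[K] P, G ∘ₗ f = g := by
  obtain ⟨G, hG⟩ := LinearMap.exists_extend
    ((LinearMap.ker f).liftQ g hfg ∘ₗ f.quotKerEquivRange.symm.toLinearMap)
  refine ⟨G, LinearMap.ext fun m => ?_⟩
  simpa using LinearMap.congr_fun hG ⟨f m, LinearMap.mem_range_self f m⟩

theorem Finset.sum_smul_eq_posPart_sub_negPart {ι M : Type*} [AddCommGroup M] [Module ℝ M]
    (s : Finset ι) (a : ι → ℝ) (f : ι → M) :
    ∑ i ∈ s, a i • f i = ∑ i ∈ s, (a i)⁺ • f i - ∑ i ∈ s, (a i)⁻ • f i := by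
  simp only [← Finset.sum_sub_distrib, ← sub_smul, posPart_sub_negPart]

theorem AffineMap.map_smul_add_one_sub_smul {k V W : Type*} [Ring k] [AddCommGroup V]
    [Module k V] [AddCommGroup W] [Module k W] (F : V →ᵃ[k] W) (x y : V) (r : k) :
    F (r • x + (1 - r) • y) = r • F x + (1 - r) • F y := by
  simpa [AffineMap.lineMap_apply_module, add_comm] using F.apply_lineMap y x r

section
variable {V W : Type*} [AddCommGroup V] [Module ℝ V] [AddCommGroup W] [Module ℝ W]
  {c : Set V} {g : c → W}

def PreservesConvexCombos (f : c → W) : Prop :=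
  ∀ (x y : c) (r : ℝ), r ∈ Icc (0:ℝ) 1 → ∀ hm : r • (x : V) + (1 - r) • (y : V) ∈ c,
    f ⟨_, hm⟩ = r • f x + (1 - r) • f y

def PreservesAffineCombos (f : c → W) : Prop :=
  ∀ (x y : c) (r : ℝ) (hm : r • (x : V) + (1 - r) • (y : V) ∈ c),
    f ⟨_, hm⟩ = r • f x + (1 - r) • f y

namespace PreservesConvexCombos

theorem convex_graph (hc : Convex ℝ c) (hg : PreservesConvexCombos g) :
    Convex ℝ (range fun x : c => ((x : V), g x)) := by
  rintro _ ⟨x, rfl⟩ _ ⟨y, rfl⟩ a b ha hb hab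
  obtain rfl : b = 1 - a := by linarith
  have hm : a • (x : V) + (1 - a) • (y : V) ∈ c := hc x.2 y.2 ha hb hab
  exact ⟨⟨_, hm⟩, by simp [hg x y a ⟨ha, by linarith⟩ hm]⟩

theorem map_centerMass (hc : Convex ℝ c) (hg : PreservesConvexCombos g) {ι : Type*}
    {s : Finset ι} {w : ι → ℝ} (z : ι → c) (hw₀ : ∀ i ∈ s, 0 ≤ w i) (hw : 0 < ∑ i ∈ s, w i) :
    g ⟨s.centerMass w (fun i => (z i : V)), hc.centerMass_mem hw₀ hw fun i _ => (z i).2⟩ =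
      s.centerMass w (g ∘ z) := by
  obtain ⟨y, hy⟩ := (hg.convex_graph hc).centerMass_mem hw₀ hw fun i _ => mem_range_self (z i)
  simp only [Finset.centerMass, Prod.ext_iff, Prod.smul_fst, Prod.smul_snd, Prod.fst_sum,
    Prod.snd_sum] at hy
  exact (congrArg g (Subtype.ext hy.1.symm)).trans hy.2

theorem sum_smul_eq_of_sum_smul_eq (hc : Convex ℝ c) (hg : PreservesConvexCombos g)
    {ι : Type*} {s : Finset ι} {w v : ι → ℝ} (z : ι → c) (hw₀ : ∀ i ∈ s, 0 ≤ w i)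
    (hv₀ : ∀ i ∈ s, 0 ≤ v i) (hwv : ∑ i ∈ s, w i = ∑ i ∈ s, v i)
    (hz : ∑ i ∈ s, w i • (z i : V) = ∑ i ∈ s, v i • (z i : V)) :
    ∑ i ∈ s, w i • g (z i) = ∑ i ∈ s, v i • g (z i) := by
  rcases (Finset.sum_nonneg hw₀).eq_or_lt with hw | hw
  · have hw0 := (Finset.sum_eq_zero_iff_of_nonneg hw₀).1 hw.symm
    have hv0 := (Finset.sum_eq_zero_iff_of_nonneg hv₀).1 (hwv ▸ hw.symm)
    rw [Finset.sum_eq_zero fun i hi => by rw [hw0 i hi, zero_smul],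
      Finset.sum_eq_zero fun i hi => by rw [hv0 i hi, zero_smul]]
  · have hcm := (hg.map_centerMass hc z hw₀ hw).symm.trans
      ((congrArg g (Subtype.ext (by simp only [Finset.centerMass, hwv, hz]))).trans
        (hg.map_centerMass hc z hv₀ (hwv ▸ hw)))
    simp only [Finset.centerMass, Function.comp_apply, hwv] at hcm
    exact smul_right_injective W (inv_ne_zero (hwv ▸ hw.ne')) hcm

theorem sum_smul_eq_zero (hc : Convex ℝ c) (hg : PreservesConvexCombos g) {ι : Type*}
    (s : Finset ι) (a : ι → ℝ) (z : ι → c) (ha : ∑ i ∈ s, a i = 0)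
    (haz : ∑ i ∈ s, a i • (z i : V) = 0) : ∑ i ∈ s, a i • g (z i) = 0 := by
  rw [Finset.sum_smul_eq_posPart_sub_negPart, sub_eq_zero]
  refine hg.sum_smul_eq_of_sum_smul_eq hc z (fun i _ => posPart_nonneg (a i))
    (fun i _ => negPart_nonneg (a i)) ?_ ?_
  · simpa [sub_eq_zero, ha] using
      (Finset.sum_smul_eq_posPart_sub_negPart s a fun _ => (1 : ℝ)).symm
  · rwa [Finset.sum_smul_eq_posPart_sub_negPart, sub_eq_zero] at haz

theorem exists_affineMap_extension (hc : Convex ℝ c) (hg : PreservesConvexCombos g) :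
    ∃ F : V →ᵃ[ℝ] W, ∀ x : c, F x = g x := by
  let L : (c →₀ ℝ) →ₗ[ℝ] V × ℝ := Finsupp.linearCombination ℝ fun x => ((x : V), (1 : ℝ))
  obtain ⟨G, hG⟩ := LinearMap.exists_comp_eq_of_ker_le L (Finsupp.linearCombination ℝ g) <| by
    intro f hf
    simp only [LinearMap.mem_ker, L, Finsupp.linearCombination_apply, Finsupp.sum,
      Prod.ext_iff, Prod.fst_sum, Prod.snd_sum, Prod.smul_mk, smul_eq_mul, mul_one] at hf ⊢
    exact hg.sum_smul_eq_zero hc f.support f id hf.2 hf.1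
  refine ⟨(G ∘ₗ LinearMap.inl ℝ V ℝ).toAffineMap + AffineMap.const ℝ V (G (0, 1)), fun x => ?_⟩
  have := LinearMap.congr_fun hG (Finsupp.single x 1)
  simp only [LinearMap.coe_comp, Function.comp_apply, Finsupp.linearCombination_single, one_smul,
    L] at this
  simp [← map_add, this]

end PreservesConvexCombos

theorem AffineMap.mapsTo_affSpanSet {s : Set V} {t : Set W} (F : V →ᵃ[ℝ] W)
    (hst : MapsTo F s t) : MapsTo F (affSpanSet s) (affSpanSet t) := by
  rintro _ ⟨u, hu, v, hv, r, rfl⟩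
  exact ⟨F u, hst hu, F v, hst hv, r, F.map_smul_add_one_sub_smul u v r⟩

theorem PreservesAffineCombos.eq_of_eqOn {K₁ K₂ : affSpanSet c → W}
    (h₁ : PreservesAffineCombos K₁) (h₂ : PreservesAffineCombos K₂)
    (heq : ∀ x : c, K₁ ⟨x, mem_affSpanSet_self x.2⟩ = K₂ ⟨x, mem_affSpanSet_self x.2⟩) :
    K₁ = K₂ := by
  funext ⟨_, u, hu, v, hv, r, rfl⟩
  have hu' := mem_affSpanSet_self hu
  have hv' := mem_affSpanSet_self hv
  calc K₁ _ = r • K₁ ⟨u, hu'⟩ + (1 - r) • K₁ ⟨v, hv'⟩ := h₁ ⟨u, hu'⟩ ⟨v, hv'⟩ r _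
    _ = r • K₂ ⟨u, hu'⟩ + (1 - r) • K₂ ⟨v, hv'⟩ := by rw [heq ⟨u, hu⟩, heq ⟨v, hv⟩]
    _ = K₂ _ := (h₂ ⟨u, hu'⟩ ⟨v, hv'⟩ r _).symm

end

theorem stmt10_general {V V' : Type*} [AddCommGroup V] [Module ℝ V] [AddCommGroup V'] [Module ℝ V']
    (c : Set V) (c' : Set V') (hc : Convex ℝ c)
    (h : c → c')
    (haff : ∀ (x y : c) (r : ℝ), r ∈ Icc (0:ℝ) 1 →
      ∀ hm : r • (x : V) + (1 - r) • (y : V) ∈ c,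
      ((h ⟨_, hm⟩ : c') : V') = r • ((h x : c') : V') + (1 - r) • ((h y : c') : V')) :
    ∃! H : affSpanSet c → affSpanSet c',
      (∀ (x y : affSpanSet c) (r : ℝ),
        ∀ hm : r • (x : V) + (1 - r) • (y : V) ∈ affSpanSet c,
        ((H ⟨_, hm⟩ : affSpanSet c') : V') =
          r • ((H x : affSpanSet c') : V') + (1 - r) • ((H y : affSpanSet c') : V')) ∧
      (∀ (x : c), ((H ⟨(x : V), mem_affSpanSet_self x.2⟩ : affSpanSet c') : V') =
        ((h x : c') : V')) := by
  obtain ⟨F, hF⟩ := PreservesConvexCombos.exists_affineMap_extension (g := fun x => (h x : V'))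
    hc haff
  have hmaps : MapsTo F c c' := fun x hx => hF ⟨x, hx⟩ ▸ (h ⟨x, hx⟩).2
  let H : affSpanSet c → affSpanSet c' := fun w => ⟨F w, F.mapsTo_affSpanSet hmaps w.2⟩
  have hH : PreservesAffineCombos fun w => (H w : V') :=
    fun x y r _ => F.map_smul_add_one_sub_smul x y r
  refine ⟨H, ⟨hH, hF⟩, fun H' ⟨hH', hH'c⟩ => funext fun w => Subtype.ext ?_⟩
  exact congrFun (PreservesAffineCombos.eq_of_eqOn (K₁ := fun w => (H' w : V')) hH' hH
    fun x => (hH'c x).trans (hF x).symm) w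

/-- An affine map between convex sets extends uniquely to an affine map between their
affine spans. -/
theorem stmt10 {V V' : Type*} [AddCommGroup V] [Module ℝ V] [AddCommGroup V'] [Module ℝ V']
    (c : Set V) (c' : Set V') (hc : Convex ℝ c) (hc' : Convex ℝ c')
    (h : c → c')
    (haff : ∀ (x y : c) (r : ℝ), r ∈ Icc (0:ℝ) 1 →
      ∀ hm : r • (x : V) + (1 - r) • (y : V) ∈ c,
      ((h ⟨_, hm⟩ : c') : V') = r • ((h x : c') : V') + (1 - r) • ((h y : c') : V')) :
    ∃! H : affSpanSet c → affSpanSet c',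
      (∀ (x y : affSpanSet c) (r : ℝ),
        ∀ hm : r • (x : V) + (1 - r) • (y : V) ∈ affSpanSet c,
        ((H ⟨_, hm⟩ : affSpanSet c') : V') =
          r • ((H x : affSpanSet c') : V') + (1 - r) • ((H y : affSpanSet c') : V')) ∧
      (∀ (x : c), ((H ⟨(x : V), mem_affSpanSet_self x.2⟩ : affSpanSet c') : V') =
        ((h x : c') : V')) :=
  stmt10_general c c' hc h haff
end

section
/- Let d₀ be the set of sequences in [0,1] converging to 0, viewed as a convex subset of the space c₀ of real sequences converging to 0. Every affine map h : d₀ → [0,1] is of the form h(x) = a₀ + Σ_{i=1}^∞ aᵢ xᵢ for some real numbers aᵢ with Σ_{i=1}^∞ |aᵢ| < ∞. -/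
/-!
Put `g = h - h 0` and `aᵢ = g eᵢ`. Affinity makes `g` additive and `[0,1]`-homogeneous on `d₀`,
so `g (1_F x) = ∑_{i ∈ F} aᵢ xᵢ` for finite `F`. As `|g| ≤ 1` on `d₀`, every finite sum of the
`aᵢ` lies in `[-1, 1]`, whence `∑ |aᵢ| ≤ 2`. If `y ∈ d₀` has all entries at most `δ ≤ 1`, then
writing `y = δ • (δ⁻¹ • y)` gives `|g y| ≤ δ`; so `g` of the tails of `x` tends to `0`, and the
partial sums `∑_{i < N} aᵢ xᵢ = g x - g (tail_N x)` converge to `g x`.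
-/

open Set Filter

/-- `d₀`: the set of sequences in `[0,1]` converging to `0`. -/
def d0 : Set (ℕ → ℝ) :=
  {x | (∀ n, x n ∈ Icc (0:ℝ) 1) ∧ Tendsto x atTop (nhds 0)}

def IsAffineOn {E : Type*} [AddCommGroup E] [Module ℝ E] (S : Set E) (h : E → ℝ) : Prop :=
  ∀ x ∈ S, ∀ y ∈ S, ∀ r ∈ Icc (0:ℝ) 1, h (r • x + (1 - r) • y) = r * h x + (1 - r) * h y

namespace IsAffineOn

variable {E : Type*} [AddCommGroup E] [Module ℝ E] {S : Set E} {h : E → ℝ} {x y : E}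

theorem map_smul (hh : IsAffineOn S h) (h0 : 0 ∈ S) (hx : x ∈ S) {r : ℝ} (hr : r ∈ Icc (0:ℝ) 1) :
    h (r • x) = r * h x + (1 - r) * h 0 := by
  simpa using hh x hx 0 h0 r hr

theorem map_add (hh : IsAffineOn S h) (h0 : 0 ∈ S) (hx : x ∈ S) (hy : y ∈ S)
    (hxy : x + y ∈ S) : h (x + y) = h x + h y - h 0 := by
  have hmid := hh x hx y hy (1 / 2) (by norm_num)
  rw [show (1 - 1 / 2 : ℝ) = 1 / 2 by norm_num, ← smul_add,
    hh.map_smul h0 hxy (by norm_num)] at hmid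
  linarith

end IsAffineOn

theorem sum_abs_le_two_mul_of_forall_abs_sum_le {ι : Type*} {a : ι → ℝ} {C : ℝ}
    (ha : ∀ s : Finset ι, |∑ i ∈ s, a i| ≤ C) (s : Finset ι) : ∑ i ∈ s, |a i| ≤ 2 * C := by
  classical
  have hpos : ∑ i ∈ s with 0 ≤ a i, |a i| = ∑ i ∈ s with 0 ≤ a i, a i :=
    Finset.sum_congr rfl fun i hi => abs_of_nonneg (Finset.mem_filter.mp hi).2
  have hneg : ∑ i ∈ s with ¬0 ≤ a i, |a i| = -∑ i ∈ s with ¬0 ≤ a i, a i := by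
    rw [← Finset.sum_neg_distrib]
    exact Finset.sum_congr rfl fun i hi => abs_of_neg (not_le.mp (Finset.mem_filter.mp hi).2)
  rw [← Finset.sum_filter_add_sum_filter_not s (fun i => 0 ≤ a i), hpos, hneg]
  linarith [le_abs_self (∑ i ∈ s with 0 ≤ a i, a i), neg_abs_le (∑ i ∈ s with ¬0 ≤ a i, a i),
    ha {i ∈ s | 0 ≤ a i}, ha {i ∈ s | ¬0 ≤ a i}]

theorem zero_mem_d0 : (0 : ℕ → ℝ) ∈ d0 :=
  ⟨fun _ => ⟨le_rfl, zero_le_one⟩, tendsto_const_nhds⟩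

theorem indicator_finset_mem_d0 {x : ℕ → ℝ} (hx : ∀ n, x n ∈ Icc (0:ℝ) 1) (s : Finset ℕ) :
    (s : Set ℕ).indicator x ∈ d0 := by
  refine ⟨fun n => ?_, tendsto_const_nhds.congr' ?_⟩
  · by_cases hn : n ∈ s
    · simpa [hn] using hx n
    · simp [hn]
  · rw [← Nat.cofinite_eq_atTop]
    filter_upwards [s.eventually_cofinite_notMem] with n hn
    simp [hn]

theorem single_mem_d0 (i : ℕ) {c : ℝ} (hc : c ∈ Icc (0:ℝ) 1) : Pi.single i c ∈ d0 := by
  simpa [indicator_singleton] using indicator_finset_mem_d0 (fun _ => hc) {i}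

theorem indicator_mem_d0 {x : ℕ → ℝ} (hx : x ∈ d0) (s : Set ℕ) : s.indicator x ∈ d0 := by
  refine ⟨fun n => ?_, squeeze_zero_norm (norm_indicator_le_norm_self x) ?_⟩
  · by_cases hn : n ∈ s
    · simpa [hn] using hx.1 n
    · simp [hn]
  · simpa using hx.2.norm

def affineCoeff (h : (ℕ → ℝ) → ℝ) (i : ℕ) : ℝ := h (Pi.single i 1) - h 0

section

variable {h : (ℕ → ℝ) → ℝ}

theorem map_single (hh : IsAffineOn d0 h) (i : ℕ) {c : ℝ} (hc : c ∈ Icc (0:ℝ) 1) :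
    h (Pi.single i c) = h 0 + c * affineCoeff h i := by
  rw [show Pi.single i c = c • Pi.single i (1 : ℝ) by simp [← Pi.single_smul'],
    hh.map_smul zero_mem_d0 (single_mem_d0 i ⟨zero_le_one, le_rfl⟩) hc, affineCoeff]
  ring

theorem map_indicator_finset (hh : IsAffineOn d0 h) {x : ℕ → ℝ}
    (hx : ∀ n, x n ∈ Icc (0:ℝ) 1) (s : Finset ℕ) :
    h ((s : Set ℕ).indicator x) = h 0 + ∑ i ∈ s, affineCoeff h i * x i := by
  induction s using Finset.induction_on with
  | empty => rw [Finset.coe_empty, indicator_empty', Finset.sum_empty, add_zero]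
  | insert i s hi ih =>
    have hsplit : ((insert i s : Finset ℕ) : Set ℕ).indicator x
        = Pi.single i (x i) + (s : Set ℕ).indicator x := by
      rw [Finset.coe_insert, insert_eq, indicator_union_of_disjoint (by simpa using hi),
        indicator_singleton]
      rfl
    rw [hsplit, hh.map_add zero_mem_d0 (single_mem_d0 i (hx i)) (indicator_finset_mem_d0 hx s)
      (hsplit ▸ indicator_finset_mem_d0 hx _), map_single hh i (hx i), ih, Finset.sum_insert hi]
    ring

theorem abs_sub_map_zero_le_one (hmaps : ∀ x ∈ d0, h x ∈ Icc (0:ℝ) 1) {y : ℕ → ℝ}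
    (hy : y ∈ d0) : |h y - h 0| ≤ 1 := by
  have h1 := hmaps y hy
  have h0 := hmaps 0 zero_mem_d0
  rw [abs_le]
  constructor <;> linarith [h1.1, h1.2, h0.1, h0.2]

variable (hh : IsAffineOn d0 h) (hmaps : ∀ x ∈ d0, h x ∈ Icc (0:ℝ) 1)
include hh hmaps

theorem abs_sum_affineCoeff_le (s : Finset ℕ) : |∑ i ∈ s, affineCoeff h i| ≤ 1 := by
  have hone : ∀ _ : ℕ, (1 : ℝ) ∈ Icc (0:ℝ) 1 := fun _ => ⟨zero_le_one, le_rfl⟩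
  have hs := abs_sub_map_zero_le_one hmaps (indicator_finset_mem_d0 (x := fun _ => 1) hone s)
  simpa only [map_indicator_finset hh hone s, mul_one, add_sub_cancel_left] using hs

theorem summable_abs_affineCoeff : Summable fun i => |affineCoeff h i| :=
  summable_of_sum_le (fun _ => abs_nonneg _)
    (sum_abs_le_two_mul_of_forall_abs_sum_le (abs_sum_affineCoeff_le hh hmaps))

theorem abs_sub_map_zero_le {y : ℕ → ℝ} (hy : y ∈ d0) {δ : ℝ} (hδ : 0 < δ) (hyδ : ∀ n, y n ≤ δ) :
    |h y - h 0| ≤ δ := by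
  rcases le_or_gt 1 δ with h1 | h1
  · exact (abs_sub_map_zero_le_one hmaps hy).trans h1
  have hz : δ⁻¹ • y ∈ d0 := by
    refine ⟨fun n => ⟨?_, ?_⟩, ?_⟩
    · exact smul_nonneg (inv_nonneg.mpr hδ.le) (hy.1 n).1
    · rw [Pi.smul_apply, smul_eq_mul, inv_mul_le_iff₀ hδ, mul_one]
      exact hyδ n
    · have hlim := hy.2.const_smul δ⁻¹
      rwa [smul_zero] at hlim
  have hscale := hh.map_smul zero_mem_d0 hz ⟨hδ.le, h1.le⟩
  rw [smul_smul, mul_inv_cancel₀ hδ.ne', one_smul] at hscale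
  calc |h y - h 0| = δ * |h (δ⁻¹ • y) - h 0| := by
        rw [hscale, show δ * h (δ⁻¹ • y) + (1 - δ) * h 0 - h 0 = δ * (h (δ⁻¹ • y) - h 0) by ring,
          abs_mul, abs_of_pos hδ]
    _ ≤ δ * 1 := by gcongr; exact abs_sub_map_zero_le_one hmaps hz
    _ = δ := mul_one δ

theorem tendsto_map_indicator_Ici {x : ℕ → ℝ} (hx : x ∈ d0) :
    Tendsto (fun N => h ((Ici N).indicator x)) atTop (nhds (h 0)) := by
  rw [Metric.tendsto_atTop]
  intro ε hε
  obtain ⟨N₀, hN₀⟩ := eventually_atTop.mp (hx.2.eventually (gt_mem_nhds (half_pos hε)))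
  refine ⟨N₀, fun N hN => ?_⟩
  rw [Real.dist_eq]
  refine (abs_sub_map_zero_le hh hmaps (indicator_mem_d0 hx _) (half_pos hε) fun n => ?_).trans_lt
    (half_lt_self hε)
  by_cases hn : n ∈ Ici N
  · rw [indicator_of_mem hn]
    exact (hN₀ n (hN.trans hn)).le
  · rw [indicator_of_notMem hn]
    exact (half_pos hε).le

theorem hasSum_affineCoeff_mul {x : ℕ → ℝ} (hx : x ∈ d0) :
    HasSum (fun i => affineCoeff h i * x i) (h x - h 0) := by
  have hsum : Summable fun i => affineCoeff h i * x i :=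
    (summable_abs_affineCoeff hh hmaps).of_norm_bounded fun i => by
      rw [Real.norm_eq_abs, abs_mul]
      exact mul_le_of_le_one_right (abs_nonneg _)
        (abs_le.mpr ⟨by linarith [(hx.1 i).1], (hx.1 i).2⟩)
  have hsplit : ∀ N, ∑ i ∈ Finset.range N, affineCoeff h i * x i
      = h x - h ((Ici N).indicator x) := fun N => by
    have hadd := hh.map_add zero_mem_d0 (indicator_mem_d0 hx (Finset.range N))
      (indicator_mem_d0 hx (Finset.range N : Set ℕ)ᶜ) (by rwa [indicator_self_add_compl])
    rw [indicator_self_add_compl, map_indicator_finset hh hx.1, Finset.coe_range,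
      compl_Iio] at hadd
    linarith
  rw [hsum.hasSum_iff_tendsto_nat]
  simpa only [hsplit] using tendsto_const_nhds.sub (tendsto_map_indicator_Ici hh hmaps hx)

end

/-- Every affine map `d₀ → [0,1]` has the form `x ↦ a₀ + ∑ aᵢ xᵢ` with `∑ |aᵢ| < ∞`. -/
theorem stmt12 (h : (ℕ → ℝ) → ℝ)
    (hmaps : ∀ x ∈ d0, h x ∈ Icc (0:ℝ) 1)
    (haff : ∀ x ∈ d0, ∀ y ∈ d0, ∀ r ∈ Icc (0:ℝ) 1,
      h (fun i => r * x i + (1 - r) * y i) = r * h x + (1 - r) * h y) :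
    ∃ (a₀ : ℝ) (a : ℕ → ℝ), Summable (fun i => |a i|) ∧
      ∀ x ∈ d0, h x = a₀ + ∑' i, a i * x i := by
  have hh : IsAffineOn d0 h := haff
  refine ⟨h 0, affineCoeff h, summable_abs_affineCoeff hh hmaps, fun x hx => ?_⟩
  rw [(hasSum_affineCoeff_mul hh hmaps hx).tsum_eq]
  ring
end

section
/- Let Ω be a measurable space, and let α be a family of functions α_c : Meas(Ω, Uc) → Uc, indexed by objects c of the category 𝒞 of finite powers of [0,1] and affine maps, natural in c (where U is the forgetful functor to measurable spaces). Then α_{[0,1]} : Meas(Ω,[0,1]) → [0,1] is affine and weakly averaging, and moreover α_{[0,1]ⁿ} is given by applying α_{[0,1]} componentwise: α_{[0,1]ⁿ}(f₁,…,fₙ) = (α_{[0,1]}(f₁),…,α_{[0,1]}(fₙ)). -/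
/-!
Each claim is naturality along a single affine map. A constant map `I → I` gives weak
averaging and a coordinate projection `Iⁿ → I` gives the coordinatewise description. For
affinity, apply naturality to `x ↦ r x₀ + (1 - r) x₁ : I² → I` at the pair `(f, g) : Ω → I²`,
whose image under `α` has coordinates `α f` and `α g` by the projection case.
-/

open Set

/-- the unit cube `[0,1]ⁿ` -/
def InCube {n : ℕ} (x : Fin n → ℝ) : Prop := ∀ i, x i ∈ Icc (0:ℝ) 1

/-- `Meas(Ω, Iⁿ)`: measurable maps from `Ω` to the unit cube. -/
def MeasCube (Ω : Type*) [MeasurableSpace Ω] (n : ℕ) : Set (Ω → (Fin n → ℝ)) :=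
  {f | Measurable f ∧ ∀ ω, InCube (f ω)}

/-- An affine map `Iⁿ → Iᵐ` (a morphism of the category `𝒞`). -/
def IsAffineCubeMap {n m : ℕ} (h : (Fin n → ℝ) → (Fin m → ℝ)) : Prop :=
  (∀ x, InCube x → InCube (h x)) ∧
  ∀ x y (r : ℝ), InCube x → InCube y → r ∈ Icc (0:ℝ) 1 →
    h (fun i => r * x i + (1 - r) * y i) = fun i => r * h x i + (1 - r) * h y i

theorem isAffineCubeMap_eval {n : ℕ} (i : Fin n) :
    IsAffineCubeMap (fun x : Fin n → ℝ => fun _ : Fin 1 => x i) :=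
  ⟨fun _ hx _ => hx i, fun _ _ _ _ _ _ => rfl⟩

theorem isAffineCubeMap_const {n m : ℕ} {c : Fin m → ℝ} (hc : InCube c) :
    IsAffineCubeMap (fun _ : Fin n → ℝ => c) := by
  refine ⟨fun _ _ => hc, fun _ _ r _ _ _ => ?_⟩
  funext j
  ring

theorem isAffineCubeMap_convexCombination {r : ℝ} (hr : r ∈ Icc (0:ℝ) 1) :
    IsAffineCubeMap (fun x : Fin 2 → ℝ => fun _ : Fin 1 => r * x 0 + (1 - r) * x 1) := by
  refine ⟨fun x hx _ => ?_, fun x y s _ _ _ => ?_⟩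
  · exact convex_Icc (0:ℝ) 1 (hx 0) (hx 1) hr.1 (sub_nonneg.2 hr.2) (by ring)
  · funext j
    ring

theorem pair_mem_measCube {Ω : Type*} [MeasurableSpace Ω] {f g : Ω → ℝ}
    (hf : (fun ω => fun _ : Fin 1 => f ω) ∈ MeasCube Ω 1)
    (hg : (fun ω => fun _ : Fin 1 => g ω) ∈ MeasCube Ω 1) :
    (fun ω => ![f ω, g ω]) ∈ MeasCube Ω 2 := by
  have hmf : Measurable f := (measurable_pi_apply 0).comp hf.1
  have hmg : Measurable g := (measurable_pi_apply 0).comp hg.1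
  refine ⟨measurable_pi_lambda _ fun j => ?_, fun ω => Fin.forall_fin_two.2 ⟨hf.2 ω 0, hg.2 ω 0⟩⟩
  fin_cases j <;> simpa

section Natural

variable {Ω : Type*} [MeasurableSpace Ω] {α : ∀ n : ℕ, MeasCube Ω n → (Fin n → ℝ)}
  (hnat : ∀ (n m : ℕ) (h : (Fin n → ℝ) → (Fin m → ℝ)), IsAffineCubeMap h →
    ∀ (f : MeasCube Ω n) (hhf : (fun ω => h ((f : Ω → Fin n → ℝ) ω)) ∈ MeasCube Ω m),
    α m ⟨_, hhf⟩ = h (α n f))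
include hnat

theorem apply_eq_apply_coord {n : ℕ} (f : MeasCube Ω n) (i : Fin n)
    (hi : (fun ω => fun _ : Fin 1 => (f : Ω → Fin n → ℝ) ω i) ∈ MeasCube Ω 1) :
    α n f i = α 1 ⟨_, hi⟩ 0 :=
  (congrFun (hnat n 1 _ (isAffineCubeMap_eval i) f hi) 0).symm

theorem apply_const {r : ℝ} (hr : r ∈ Icc (0:ℝ) 1)
    (h : (fun _ : Ω => fun _ : Fin 1 => r) ∈ MeasCube Ω 1) :
    α 1 ⟨_, h⟩ 0 = r :=
  congrFun (hnat 1 1 _ (isAffineCubeMap_const fun _ => hr) ⟨_, h⟩ h) 0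

theorem apply_convexCombination {f g : Ω → ℝ} {r : ℝ} (hr : r ∈ Icc (0:ℝ) 1)
    (hf : (fun ω => fun _ : Fin 1 => f ω) ∈ MeasCube Ω 1)
    (hg : (fun ω => fun _ : Fin 1 => g ω) ∈ MeasCube Ω 1)
    (hc : (fun ω => fun _ : Fin 1 => r * f ω + (1 - r) * g ω) ∈ MeasCube Ω 1) :
    α 1 ⟨_, hc⟩ 0 = r * α 1 ⟨_, hf⟩ 0 + (1 - r) * α 1 ⟨_, hg⟩ 0 := by
  set F : MeasCube Ω 2 := ⟨_, pair_mem_measCube hf hg⟩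
  calc α 1 ⟨_, hc⟩ 0 = r * α 2 F 0 + (1 - r) * α 2 F 1 :=
        congrFun (hnat 2 1 _ (isAffineCubeMap_convexCombination hr) F hc) 0
    _ = r * α 1 ⟨_, hf⟩ 0 + (1 - r) * α 1 ⟨_, hg⟩ 0 := by
        rw [apply_eq_apply_coord hnat F 0 hf, apply_eq_apply_coord hnat F 1 hg]
        rfl

end Natural

theorem stmt17_general {Ω : Type*} [MeasurableSpace Ω]
    (α : ∀ n : ℕ, MeasCube Ω n → (Fin n → ℝ))
    (hnat : ∀ (n m : ℕ) (h : (Fin n → ℝ) → (Fin m → ℝ)), IsAffineCubeMap h →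
      ∀ (f : MeasCube Ω n) (hhf : (fun ω => h ((f : Ω → Fin n → ℝ) ω)) ∈ MeasCube Ω m),
      α m ⟨_, hhf⟩ = h (α n f)) :
    (∀ r ∈ Icc (0:ℝ) 1, ∀ h : (fun _ : Ω => fun _ : Fin 1 => r) ∈ MeasCube Ω 1,
      α 1 ⟨_, h⟩ 0 = r) ∧
    (∀ (f g : Ω → ℝ) (r : ℝ), r ∈ Icc (0:ℝ) 1 →
      ∀ (hf : (fun ω => fun _ : Fin 1 => f ω) ∈ MeasCube Ω 1)
        (hg : (fun ω => fun _ : Fin 1 => g ω) ∈ MeasCube Ω 1)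
        (hc : (fun ω => fun _ : Fin 1 => r * f ω + (1 - r) * g ω) ∈ MeasCube Ω 1),
      α 1 ⟨_, hc⟩ 0 = r * α 1 ⟨_, hf⟩ 0 + (1 - r) * α 1 ⟨_, hg⟩ 0) ∧
    (∀ (n : ℕ) (f : MeasCube Ω n) (i : Fin n)
      (hi : (fun ω => fun _ : Fin 1 => (f : Ω → Fin n → ℝ) ω i) ∈ MeasCube Ω 1),
      α n f i = α 1 ⟨_, hi⟩ 0) :=
  ⟨fun _ hr h => apply_const hnat hr h,
    fun _ _ _ hr hf hg hc => apply_convexCombination hnat hr hf hg hc,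
    fun _ f i hi => apply_eq_apply_coord hnat f i hi⟩

/-- A family `α_c : Meas(Ω, Uc) → Uc` natural in `c ∈ 𝒞` has affine, weakly averaging
component at `I`, and its component at `Iⁿ` is given by applying the `I` component
coordinatewise. -/
theorem stmt17 {Ω : Type*} [MeasurableSpace Ω]
    (α : ∀ n : ℕ, MeasCube Ω n → (Fin n → ℝ))
    (hval : ∀ n f, InCube (α n f))
    (hnat : ∀ (n m : ℕ) (h : (Fin n → ℝ) → (Fin m → ℝ)), IsAffineCubeMap h →
      ∀ (f : MeasCube Ω n) (hhf : (fun ω => h ((f : Ω → Fin n → ℝ) ω)) ∈ MeasCube Ω m),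
      α m ⟨_, hhf⟩ = h (α n f)) :
    (∀ r ∈ Icc (0:ℝ) 1, ∀ h : (fun _ : Ω => fun _ : Fin 1 => r) ∈ MeasCube Ω 1,
      α 1 ⟨_, h⟩ 0 = r) ∧
    (∀ (f g : Ω → ℝ) (r : ℝ), r ∈ Icc (0:ℝ) 1 →
      ∀ (hf : (fun ω => fun _ : Fin 1 => f ω) ∈ MeasCube Ω 1)
        (hg : (fun ω => fun _ : Fin 1 => g ω) ∈ MeasCube Ω 1)
        (hc : (fun ω => fun _ : Fin 1 => r * f ω + (1 - r) * g ω) ∈ MeasCube Ω 1),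
      α 1 ⟨_, hc⟩ 0 = r * α 1 ⟨_, hf⟩ 0 + (1 - r) * α 1 ⟨_, hg⟩ 0) ∧
    (∀ (n : ℕ) (f : MeasCube Ω n) (i : Fin n)
      (hi : (fun ω => fun _ : Fin 1 => (f : Ω → Fin n → ℝ) ω i) ∈ MeasCube Ω 1),
      α n f i = α 1 ⟨_, hi⟩ 0) :=
  stmt17_general α hnat
end
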